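/- arXiv:2002.06978 — 5 statements merged into one kernel-verified Lean document; each statement's English description precedes it below -/
import Mathlib

section
/- For all real σ > 0 and x ≥ 0, the function f(y) = sqrt(-(σ² + x y) y / (x - y)) defined for y ∈ (-σ²/x, 0) when x > 0 (and y < 0 when x = 0) attains its maximum value sqrt(σ² + x²) - x at y = x - sqrt(σ² + x²). -/
open Real

/-- For σ > 0 and x ≥ 0, the function f(y) = sqrt(-(σ² + x y) y / (x - y)) on its
domain {y < 0, σ² + x y > 0} attains its maximum value sqrt(σ² + x²) - x at
y = x - sqrt(σ² + x²). -/
theorem stmt_0 (σ x : ℝ) (hσ : 0 < σ) (hx : 0 ≤ x) :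
    (fun y : ℝ => Real.sqrt (-(σ ^ 2 + x * y) * y / (x - y)))
        (x - Real.sqrt (σ ^ 2 + x ^ 2)) = Real.sqrt (σ ^ 2 + x ^ 2) - x ∧
    ∀ y : ℝ, y < 0 → 0 < σ ^ 2 + x * y →
      (fun y : ℝ => Real.sqrt (-(σ ^ 2 + x * y) * y / (x - y))) y
        ≤ Real.sqrt (σ ^ 2 + x ^ 2) - x := by
  set s := Real.sqrt (σ ^ 2 + x ^ 2) with hs_def
  have hpos : (0:ℝ) < σ ^ 2 + x ^ 2 := by positivity
  have hs2 : s ^ 2 = σ ^ 2 + x ^ 2 := Real.sq_sqrt hpos.le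
  have hs0 : 0 < s := Real.sqrt_pos.mpr hpos
  have hxs : x < s := by nlinarith
  constructor
  · simp only
    have harg : -(σ ^ 2 + x * (x - s)) * (x - s) / (x - (x - s)) = (s - x) ^ 2 := by
      have : x - (x - s) = s := by ring
      rw [this]
      field_simp
      nlinarith
    rw [harg, Real.sqrt_sq (by linarith)]
  · intro y hy hσxy
    simp only
    have hxy : 0 < x - y := by linarith
    have key : -(σ ^ 2 + x * y) * y / (x - y) ≤ (s - x) ^ 2 := by
      rw [div_le_iff₀ hxy]
      nlinarith [mul_nonneg hx (sq_nonneg (x - y - s))]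
    calc Real.sqrt (-(σ ^ 2 + x * y) * y / (x - y)) ≤ Real.sqrt ((s - x) ^ 2) :=
          Real.sqrt_le_sqrt key
      _ = s - x := Real.sqrt_sq (by linarith)
end

section
/- For every real σ > 0 and x ≥ 0, and every real y with x - sqrt(σ² + x²) ≤ y < 0 (and σ² + xy ≥ 0), one has sqrt(-(σ² + x y) y / (x - y)) ≤ sqrt(σ² + x²) - x. -/
/-- For σ > 0, x ≥ 0 and x - sqrt(σ² + x²) ≤ y < 0 with σ² + x y ≥ 0, one has
sqrt(-(σ² + x y) y / (x - y)) ≤ sqrt(σ² + x²) - x. -/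
theorem stmt_1 (σ x y : ℝ) (hσ : 0 < σ) (hx : 0 ≤ x)
    (hy1 : x - Real.sqrt (σ ^ 2 + x ^ 2) ≤ y) (hy2 : y < 0)
    (hxy : 0 ≤ σ ^ 2 + x * y) :
    Real.sqrt (-(σ ^ 2 + x * y) * y / (x - y)) ≤ Real.sqrt (σ ^ 2 + x ^ 2) - x := by
  set s := Real.sqrt (σ ^ 2 + x ^ 2) with hs
  have hnn : 0 ≤ σ ^ 2 + x ^ 2 := by positivity
  have hs2 : s ^ 2 = σ ^ 2 + x ^ 2 := Real.sq_sqrt hnn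
  have hsx : x ≤ s := by
    nlinarith [Real.sqrt_nonneg (σ ^ 2 + x ^ 2), sq_nonneg (s - x)]
  have hxm : 0 < x - y := by linarith
  have key : -(σ ^ 2 + x * y) * y / (x - y) ≤ (s - x) ^ 2 := by
    rw [div_le_iff₀ hxm]
    nlinarith [mul_nonneg hx (sq_nonneg (s - x + y))]
  calc Real.sqrt (-(σ ^ 2 + x * y) * y / (x - y)) ≤ Real.sqrt ((s - x) ^ 2) :=
        Real.sqrt_le_sqrt key
    _ = s - x := by rw [Real.sqrt_sq (by linarith)]
end

section
/- If X is a real random variable with E[X] = 0 and E[X²] = σ², then for every x ≥ 0, 2·E[(X - x)⁺] ≤ sqrt(σ² + x²) - x. -/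
open MeasureTheory ProbabilityTheory

/-! With `Y = X - x` one has `2 Y⁺ = |Y| + Y`, so `2 E[Y⁺] = E|Y| + E[Y] = E|Y| - x`, and
`E|Y| ≤ √(E[Y²]) = √(σ² + x²)` because the variance of `|Y|` is nonnegative. -/

lemma two_mul_max_zero (a : ℝ) : 2 * max a 0 = |a| + a := by
  rcases le_total a 0 with h | h
  · rw [max_eq_right h, abs_of_nonpos h]; ring
  · rw [max_eq_left h, abs_of_nonneg h]; ring

section

variable {Ω : Type*} {m : MeasurableSpace Ω} {μ : Measure Ω} [IsProbabilityMeasure μ]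

lemma integral_abs_le_sqrt_integral_sq {Y : Ω → ℝ} (hY : MemLp Y 2 μ) :
    ∫ ω, |Y ω| ∂μ ≤ √(∫ ω, Y ω ^ 2 ∂μ) := by
  have hvar := variance_eq_sub hY.abs
  simp only [Pi.pow_apply, Pi.abs_apply, sq_abs] at hvar
  apply Real.le_sqrt_of_sq_le
  linarith [variance_nonneg |Y| μ]

lemma two_mul_integral_max_zero_le {Y : Ω → ℝ} (hY : MemLp Y 2 μ) :
    2 * ∫ ω, max (Y ω) 0 ∂μ ≤ √(∫ ω, Y ω ^ 2 ∂μ) + ∫ ω, Y ω ∂μ := by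
  have hint := hY.integrable one_le_two
  calc 2 * ∫ ω, max (Y ω) 0 ∂μ = ∫ ω, |Y ω| ∂μ + ∫ ω, Y ω ∂μ := by
        rw [← integral_const_mul, ← integral_add hint.abs hint]
        simp_rw [two_mul_max_zero]
    _ ≤ √(∫ ω, Y ω ^ 2 ∂μ) + ∫ ω, Y ω ∂μ := by
        gcongr; exact integral_abs_le_sqrt_integral_sq hY

lemma integral_sub_const_sq {X : Ω → ℝ} (hX : Integrable X μ)
    (hX2 : Integrable (fun ω => X ω ^ 2) μ) (c : ℝ) :
    ∫ ω, (X ω - c) ^ 2 ∂μ = ∫ ω, X ω ^ 2 ∂μ - 2 * c * ∫ ω, X ω ∂μ + c ^ 2 := by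
  have hexpand : (fun ω => (X ω - c) ^ 2) = fun ω => X ω ^ 2 - 2 * c * X ω + c ^ 2 := by
    funext ω; ring
  have hlin : Integrable (fun ω => X ω ^ 2 - 2 * c * X ω) μ := hX2.sub (hX.const_mul _)
  rw [hexpand, integral_add hlin (integrable_const _), integral_sub hX2 (hX.const_mul _),
    integral_const_mul, integral_const]
  simp

end

theorem stmt_2_general {Ω : Type*} [MeasureSpace Ω] [IsProbabilityMeasure (ℙ : Measure Ω)]
    (X : Ω → ℝ) (σ x : ℝ)
    (hInt : Integrable X) (hInt2 : Integrable (fun ω => X ω ^ 2))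
    (hmean : ∫ ω, X ω = 0) (hvar : ∫ ω, X ω ^ 2 = σ ^ 2) :
    2 * ∫ ω, max (X ω - x) 0 ≤ Real.sqrt (σ ^ 2 + x ^ 2) - x := by
  have hX : MemLp X 2 := (memLp_two_iff_integrable_sq hInt.aestronglyMeasurable).2 hInt2
  have hmeanY : ∫ ω, (X ω - x) = -x := by
    rw [integral_sub hInt (integrable_const x), hmean, integral_const]
    simp
  have hsqY : ∫ ω, (X ω - x) ^ 2 = σ ^ 2 + x ^ 2 := by
    rw [integral_sub_const_sq hInt hInt2, hmean, hvar]
    ring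
  have key := two_mul_integral_max_zero_le (hX.sub (memLp_const x))
  simp only [Pi.sub_apply] at key
  rw [hmeanY, hsqY] at key
  linarith

/-- If E[X] = 0 and E[X²] = σ², then for every x ≥ 0,
2·E[(X - x)⁺] ≤ sqrt(σ² + x²) - x. -/
theorem stmt_2 {Ω : Type*} [MeasureSpace Ω] [IsProbabilityMeasure (ℙ : Measure Ω)]
    (X : Ω → ℝ) (σ x : ℝ) (hx : 0 ≤ x)
    (hInt : Integrable X) (hInt2 : Integrable (fun ω => X ω ^ 2))
    (hmean : ∫ ω, X ω = 0) (hvar : ∫ ω, X ω ^ 2 = σ ^ 2) :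
    2 * ∫ ω, max (X ω - x) 0 ≤ Real.sqrt (σ ^ 2 + x ^ 2) - x :=
  stmt_2_general X σ x hInt hInt2 hmean hvar
end

section
/- For a standard normal Z, σ > 0 and x ≥ 0 (writing u = x/σ), one has 2σφ(u) - 2σu(1 - Φ(u)) ≤ sqrt(σ² + x²) - x. -/
/-!
Write `Z` for a standard Gaussian and `u = x / σ`. The left-hand side is `2σ 𝔼[(Z - u)⁺]`,
the Bachelier price of a call with strike `u`. Since `(Z - u)⁺ = ((Z - u) + |Z - u|) / 2` and
`𝔼|Z - u| ≤ √(𝔼 (Z - u)²) = √(1 + u²)` (the variance of `|Z - u|` is nonnegative),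
`𝔼[(Z - u)⁺] ≤ (√(1 + u²) - u) / 2`, and multiplying by `2σ` gives `√(σ² + x²) - x`.
-/

open MeasureTheory ProbabilityTheory

open Real Set

namespace ProbabilityTheory

section Moments

variable {Ω : Type*} [MeasurableSpace Ω] {P : Measure Ω} [IsProbabilityMeasure P]
  {X : Ω → ℝ}

theorem integral_abs_le_sqrt_integral_sq (hX : MemLp X 2 P) :
    ∫ ω, |X ω| ∂P ≤ √(∫ ω, X ω ^ 2 ∂P) := by
  have h := variance_nonneg |X| P
  rw [variance_eq_sub hX.abs] at h
  apply Real.le_sqrt_of_sq_le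
  simpa [sq_abs] using h

theorem integral_max_zero_le (hX : MemLp X 2 P) :
    ∫ ω, max (X ω) 0 ∂P ≤ (∫ ω, X ω ∂P + √(∫ ω, X ω ^ 2 ∂P)) / 2 := by
  have hint : Integrable X P := hX.integrable one_le_two
  calc ∫ ω, max (X ω) 0 ∂P = (∫ ω, X ω ∂P + ∫ ω, |X ω| ∂P) / 2 := by
        rw [← integral_add hint hint.abs, ← integral_div]
        congr with ω
        rcases le_total (X ω) 0 with h | h
        · simp [h, abs_of_nonpos h]
        · simp [h, abs_of_nonneg h]
    _ ≤ _ := by gcongr; exact integral_abs_le_sqrt_integral_sq hX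

end Moments

section Gaussian

variable {μ : ℝ} {v : NNReal}

theorem hasDerivAt_gaussianPDFReal (μ : ℝ) (v : NNReal) (t : ℝ) :
    HasDerivAt (gaussianPDFReal μ v) (-(t - μ) / v * gaussianPDFReal μ v t) t := by
  rw [gaussianPDFReal_def]
  refine ((((hasDerivAt_id' t).sub_const μ).pow 2).neg.div_const _ |>.exp.const_mul _).congr_deriv
    ?_
  simp only [Nat.cast_ofNat, Pi.neg_apply, Pi.pow_apply]
  ring

theorem integrable_gaussianPDFReal_mul (hv : v ≠ 0) {f : ℝ → ℝ}
    (hf : Integrable f (gaussianReal μ v)) :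
    Integrable (fun t ↦ gaussianPDFReal μ v t * f t) := by
  rw [gaussianReal_of_var_ne_zero _ hv, integrable_withDensity_iff_integrable_smul'
    (measurable_gaussianPDF _ _) (ae_of_all _ fun _ ↦ gaussianPDF_lt_top)] at hf
  simpa [toReal_gaussianPDF] using hf

theorem memLp_sub_const_gaussianReal (p : NNReal) (c : ℝ) :
    MemLp (fun t ↦ t - c) p (gaussianReal μ v) :=
  (memLp_id_gaussianReal p).sub (memLp_const c)

theorem integral_sub_const_gaussianReal (c : ℝ) :
    ∫ t, (t - c) ∂gaussianReal μ v = μ - c := by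
  have hid : Integrable (fun t ↦ t) (gaussianReal μ v) :=
    (memLp_id_gaussianReal 1).integrable le_rfl
  rw [integral_sub hid (integrable_const c)]
  simp [integral_id_gaussianReal]

theorem integral_sub_const_sq_gaussianReal (c : ℝ) :
    ∫ t, (t - c) ^ 2 ∂gaussianReal μ v = v + (μ - c) ^ 2 := by
  have h := variance_eq_sub (memLp_sub_const_gaussianReal (μ := μ) (v := v) 2 c)
  rw [variance_sub_const (by fun_prop), variance_fun_id_gaussianReal] at h
  simp only [Pi.pow_apply] at h
  rw [integral_sub_const_gaussianReal] at h
  linarith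

theorem setIntegral_Ioi_sub_gaussianReal (hv : v ≠ 0) (u : ℝ) :
    ∫ t in Ioi u, (t - μ) ∂gaussianReal μ v = v * gaussianPDFReal μ v u := by
  have hint := integrable_gaussianPDFReal_mul hv
    ((memLp_sub_const_gaussianReal (μ := μ) (v := v) 1 μ).integrable le_rfl)
  have hderiv (t : ℝ) : HasDerivAt (fun s ↦ -(v * gaussianPDFReal μ v s))
      (gaussianPDFReal μ v t * (t - μ)) t :=
    ((hasDerivAt_gaussianPDFReal μ v t).const_mul (v : ℝ)).neg.congr_deriv (by
      field_simp [NNReal.coe_ne_zero.mpr hv])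
  have htop := tendsto_zero_of_hasDerivAt_of_integrableOn_Ioi (a := u) (fun t _ ↦ hderiv t)
    hint.integrableOn ((integrable_gaussianPDFReal μ v).const_mul v).neg.integrableOn
  rw [← integral_indicator measurableSet_Ioi, integral_gaussianReal_eq_integral_smul hv]
  simp_rw [smul_eq_mul, ← indicator_mul_right (Ioi u) (gaussianPDFReal μ v),
    integral_indicator measurableSet_Ioi]
  simpa using integral_Ioi_of_hasDerivAt_of_tendsto' (fun t _ ↦ hderiv t) hint.integrableOn htop

theorem integral_max_sub_const_zero_gaussianReal (hv : v ≠ 0) (u : ℝ) :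
    ∫ t, max (t - u) 0 ∂gaussianReal μ v
      = v * gaussianPDFReal μ v u + (μ - u) * (gaussianReal μ v).real (Ioi u) := by
  have hmax : (fun t ↦ max (t - u) 0) = (Ioi u).indicator (fun t ↦ (t - μ) + (μ - u)) := by
    ext t
    by_cases ht : u < t
    · simp [ht, ht.le]
    · simp [ht, not_lt.mp ht]
  rw [hmax, integral_indicator measurableSet_Ioi, integral_add
    ((memLp_sub_const_gaussianReal 1 μ).integrable le_rfl).integrableOn (integrable_const _),
    setIntegral_Ioi_sub_gaussianReal hv, setIntegral_const, smul_eq_mul, mul_comm (μ - u)]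

end Gaussian

end ProbabilityTheory

theorem stmt_13_general (σ x : ℝ) (hσ : 0 < σ) :
    let u := x / σ
    let φ : ℝ → ℝ := fun t => Real.exp (-t ^ 2 / 2) / Real.sqrt (2 * Real.pi)
    let Φ : ℝ → ℝ := fun t => (gaussianReal 0 1 (Set.Iic t)).toReal
    2 * σ * φ u - 2 * σ * u * (1 - Φ u) ≤ Real.sqrt (σ ^ 2 + x ^ 2) - x := by
  intro u φ Φ
  have hφ : φ u = gaussianPDFReal 0 1 u := by simp [φ, gaussianPDFReal, div_eq_inv_mul]
  have hΦ : 1 - Φ u = (gaussianReal 0 1).real (Ioi u) := by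
    rw [← compl_Iic, probReal_compl_eq_one_sub measurableSet_Iic]
    rfl
  have hbound : ∫ t, max (t - u) 0 ∂gaussianReal 0 1 ≤ (√(1 + u ^ 2) - u) / 2 := by
    have h := integral_max_zero_le (memLp_sub_const_gaussianReal (μ := 0) (v := 1) 2 u)
    rw [integral_sub_const_gaussianReal, integral_sub_const_sq_gaussianReal] at h
    simp only [NNReal.coe_one, zero_sub, even_two, Even.neg_pow] at h
    linarith
  have hx : x = σ * u := by simp only [u]; field_simp
  have hsqrt : √(σ ^ 2 + x ^ 2) = σ * √(1 + u ^ 2) := by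
    rw [hx, show σ ^ 2 + (σ * u) ^ 2 = σ ^ 2 * (1 + u ^ 2) by ring, sqrt_mul (sq_nonneg σ),
      sqrt_sq hσ.le]
  calc 2 * σ * φ u - 2 * σ * u * (1 - Φ u)
      = 2 * σ * ∫ t, max (t - u) 0 ∂gaussianReal 0 1 := by
        rw [hφ, hΦ, integral_max_sub_const_zero_gaussianReal one_ne_zero u, NNReal.coe_one]
        ring
    _ ≤ 2 * σ * ((√(1 + u ^ 2) - u) / 2) := by gcongr
    _ = √(σ ^ 2 + x ^ 2) - x := by
        rw [hsqrt, hx]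
        ring

/-- For σ > 0 and x ≥ 0, with u = x/σ, φ the standard normal pdf and Φ its cdf:
2σφ(u) - 2σu(1 - Φ(u)) ≤ sqrt(σ² + x²) - x. -/
theorem stmt_13 (σ x : ℝ) (hσ : 0 < σ) (hx : 0 ≤ x) :
    let u := x / σ
    let φ : ℝ → ℝ := fun t => Real.exp (-t ^ 2 / 2) / Real.sqrt (2 * Real.pi)
    let Φ : ℝ → ℝ := fun t => (gaussianReal 0 1 (Set.Iic t)).toReal
    2 * σ * φ u - 2 * σ * u * (1 - Φ u) ≤ Real.sqrt (σ ^ 2 + x ^ 2) - x :=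
  stmt_13_general σ x hσ
end

section
/- For σ > 0 and all x ≥ 0, (2σ/e)·exp(-x/σ) ≤ sqrt(σ² + x²) - x. -/
/-- For σ > 0 and x ≥ 0, (2σ/e)·exp(-x/σ) ≤ sqrt(σ² + x²) - x. -/
theorem stmt_15 (σ x : ℝ) (hσ : 0 < σ) (hx : 0 ≤ x) :
    (2 * σ / Real.exp 1) * Real.exp (-x / σ) ≤ Real.sqrt (σ ^ 2 + x ^ 2) - x := by
  set s := Real.sqrt (σ ^ 2 + x ^ 2) with hs
  have hs0 : 0 ≤ s := Real.sqrt_nonneg _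
  have hssq : s ^ 2 = σ ^ 2 + x ^ 2 := Real.sq_sqrt (by positivity)
  have hsx : x ≤ s := by
    have := Real.sqrt_le_sqrt (show x ^ 2 ≤ σ ^ 2 + x ^ 2 by nlinarith)
    rwa [Real.sqrt_sq hx] at this
  have hden : 0 < σ + 2 * x := by linarith
  have hlb : σ ^ 2 / (σ + 2 * x) ≤ s - x := by
    have hsup : s ≤ σ + x := by
      have := Real.sqrt_le_sqrt (show σ ^ 2 + x ^ 2 ≤ (σ + x) ^ 2 by nlinarith)
      rwa [Real.sqrt_sq (by positivity)] at this
    rw [div_le_iff₀ hden]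
    nlinarith [mul_nonneg (sub_nonneg.2 hsx) hx]
  refine le_trans ?_ hlb
  have he1 : (2.7182818283 : ℝ) < Real.exp 1 := by
    have := Real.exp_one_gt_d9; linarith
  have hexp : Real.exp (-x / σ) = 1 / Real.exp (x / σ) := by
    rw [neg_div, Real.exp_neg]; ring
  have hq : (1 + x / (2 * σ)) ^ 2 ≤ Real.exp (x / σ) := by
    have h1 := Real.add_one_le_exp (x / (2 * σ))
    have h2 : Real.exp (x / (2 * σ)) ^ 2 = Real.exp (x / σ) := by
      rw [← Real.exp_nat_mul]
      congr 1
      field_simp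
      ring
    rw [← h2]
    exact pow_le_pow_left₀ (by positivity) (by linarith) 2
  rw [hexp]
  rw [div_mul_eq_mul_div, div_le_div_iff₀ (by positivity) hden]
  have h3 : σ ^ 2 * (1 + x / (2 * σ)) ^ 2 = σ ^ 2 + σ * x + x ^ 2 / 4 := by
    field_simp; ring
  have h4 : σ ^ 2 * (1 + x / (2 * σ)) ^ 2 ≤ σ ^ 2 * Real.exp (x / σ) := by
    nlinarith [sq_nonneg σ]
  have h5 : 2 * σ ^ 2 + 4 * σ * x ≤ Real.exp 1 * (σ ^ 2 + σ * x + x ^ 2 / 4) := by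
    nlinarith [sq_nonneg (Real.exp 1 * x - 2 * (4 - Real.exp 1) * σ),
      mul_nonneg hσ.le hx, sq_nonneg x, sq_nonneg σ]
  have key : 2 * σ * (σ + 2 * x) ≤ σ ^ 2 * Real.exp 1 * Real.exp (x / σ) := by
    calc 2 * σ * (σ + 2 * x) = 2 * σ ^ 2 + 4 * σ * x := by ring
      _ ≤ Real.exp 1 * (σ ^ 2 + σ * x + x ^ 2 / 4) := h5
      _ = Real.exp 1 * (σ ^ 2 * (1 + x / (2 * σ)) ^ 2) := by rw [h3]
      _ ≤ σ ^ 2 * Real.exp 1 * Real.exp (x / σ) := by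
          nlinarith [Real.exp_pos (1:ℝ), h4]
  have hrw : 2 * σ * (1 / Real.exp (x / σ)) * (σ + 2 * x)
      = 2 * σ * (σ + 2 * x) / Real.exp (x / σ) := by ring
  rw [hrw, div_le_iff₀ (Real.exp_pos _)]
  nlinarith [key]
end
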